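/- Let K : ℝ → ℝ be continuously differentiable with support contained in [−1,1], a : ℝ → ℝ be 1-periodic and continuously differentiable, ψ : ℝ → ℂ be 1-periodic and continuously differentiable, k ∈ ℝ, and ε, η > 0 with α := ε/η. Define h(x,α) := −α² K′(αx) a(x) − α K(αx) a′(x). Then h(·,α) is continuous with support contained in [−1/α, 1/α], and ε ∫_ℝ K_η(x) a(x/ε) ∂_x[ ψ(x/ε) e^{ikx/ε} ] dx = ∫_ℝ h(x,α) ψ(x) e^{ikx} dx. Moreover, if α ≤ 1 then ∫_ℝ |h(x,α)|² dx ≤ C (1+α)², where C depends only on K and a. -/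

import Mathlib

/-!
Write `w(y) = K(αy) a(y)`. Then `h(·, α) = -α w'`, so after the substitution `x = εy`
the left-hand side becomes `α ∫ w (ψ e^{ik·})'`, and one integration by parts against
the compactly supported `w` gives `∫ h ψ e^{ik·}`. Since `K` and `K'` vanish outside
`[-1, 1]`, `h(·, α)` vanishes outside `[-1/α, 1/α]`; there `|h| ≤ α (1 + α) B²` for a common
bound `B` of `K, K', a, a'` (the periodic `a, a'` are bounded), so
`∫ h² ≤ (2/α) (α (1 + α) B²)² ≤ 2 B⁴ (1 + α)²` when `α ≤ 1`.
-/

open MeasureTheory Function Set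

theorem Function.Periodic.deriv {𝕜 F : Type*} [NontriviallyNormedField 𝕜]
    [NormedAddCommGroup F] [NormedSpace 𝕜 F] {f : 𝕜 → F} {c : 𝕜} (hf : Periodic f c) :
    Periodic (deriv f) c :=
  fun x => by rw [← deriv_comp_add_const, show (fun y => f (y + c)) = f from funext hf]

theorem mem_Icc_one_div_of_mul_mem_Icc {α x : ℝ} (hα : 0 < α) (h : α * x ∈ Icc (-1) 1) :
    x ∈ Icc (-(1 / α)) (1 / α) := by
  rw [mem_Icc, ← abs_le, abs_mul, abs_of_pos hα] at h
  rw [mem_Icc, ← abs_le, le_div_iff₀ hα]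
  linarith

theorem integral_mul_deriv_eq_neg_of_hasCompactSupport {A : Type*} [NormedRing A]
    [NormedAlgebra ℝ A] [CompleteSpace A] {u v : ℝ → A} (hu : ContDiff ℝ 1 u)
    (hv : ContDiff ℝ 1 v) (hsupp : HasCompactSupport u) :
    ∫ x, u x * deriv v x = -∫ x, deriv u x * v x :=
  integral_mul_deriv_eq_deriv_mul_of_integrable
    (fun x _ => (hu.differentiable one_ne_zero x).hasDerivAt)
    (fun x _ => (hv.differentiable one_ne_zero x).hasDerivAt)
    ((hu.continuous.mul (hv.continuous_deriv le_rfl)).integrable_of_hasCompactSupport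
      hsupp.mul_right)
    (((hu.continuous_deriv le_rfl).mul hv.continuous).integrable_of_hasCompactSupport
      hsupp.deriv.mul_right)
    ((hu.continuous.mul hv.continuous).integrable_of_hasCompactSupport hsupp.mul_right)

theorem integral_sq_le_of_support_subset_Icc {f : ℝ → ℝ} {r M : ℝ}
    (hr : 0 ≤ r) (hsupp : support f ⊆ Icc (-r) r) (hM : ∀ x, |f x| ≤ M) :
    ∫ x, f x ^ 2 ≤ 2 * r * M ^ 2 := by
  have hzero : ∀ x ∉ Icc (-r) r, f x ^ 2 = 0 := fun x hx => by
    rw [notMem_support.1 (fun h => hx (hsupp h)), zero_pow two_ne_zero]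
  rw [← setIntegral_eq_integral_of_forall_compl_eq_zero hzero]
  calc ∫ x in Icc (-r) r, f x ^ 2 ≤ ‖∫ x in Icc (-r) r, f x ^ 2‖ := Real.le_norm_self _
    _ ≤ M ^ 2 * volume.real (Icc (-r) r) :=
      norm_setIntegral_le_of_norm_le_const measure_Icc_lt_top fun x _ => by
        rw [norm_pow, Real.norm_eq_abs]
        exact pow_le_pow_left₀ (abs_nonneg _) (hM x) 2
    _ = 2 * r * M ^ 2 := by
      rw [Real.volume_real_Icc_of_le (by linarith)]; ring

-- The paper's `h(x, α)`, with `α` first so that `fluxWeight K a α` is `h(·, α)`.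
noncomputable def fluxWeight (K a : ℝ → ℝ) (α x : ℝ) : ℝ :=
  -α ^ 2 * deriv K (α * x) * a x - α * K (α * x) * deriv a x

section FluxWeight

variable {K a : ℝ → ℝ}

theorem continuous_fluxWeight (hK : ContDiff ℝ 1 K) (ha : ContDiff ℝ 1 a) (α : ℝ) :
    Continuous (fluxWeight K a α) := by
  have := hK.continuous; have := ha.continuous
  have := hK.continuous_deriv le_rfl; have := ha.continuous_deriv le_rfl
  unfold fluxWeight
  fun_prop

theorem support_fluxWeight_subset (hKsupp : support K ⊆ Icc (-1) 1) {α : ℝ} (hα : 0 < α) :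
    support (fluxWeight K a α) ⊆ Icc (-(1 / α)) (1 / α) := by
  intro x hx
  have hK' : support (deriv K) ⊆ Icc (-1) 1 :=
    support_deriv_subset.trans (closure_minimal hKsupp isClosed_Icc)
  refine mem_Icc_one_div_of_mul_mem_Icc hα (by_contra fun hout => hx ?_)
  simp [fluxWeight, notMem_support.1 (mt (@hKsupp _) hout),
    notMem_support.1 (mt (@hK' _) hout)]

theorem fluxWeight_eq_neg_mul_deriv (hK : Differentiable ℝ K) (ha : Differentiable ℝ a)
    (α : ℝ) : fluxWeight K a α = fun x => -α * deriv (fun y => K (α * y) * a y) x := by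
  funext x
  rw [deriv_fun_mul (by fun_prop) (ha x), deriv_comp_mul_left, fluxWeight, smul_eq_mul]
  ring

theorem abs_fluxWeight_le {α B : ℝ} (hα : 0 ≤ α) (hK : ∀ x, |K x| ≤ B)
    (hK' : ∀ x, |deriv K x| ≤ B) (ha : ∀ x, |a x| ≤ B) (ha' : ∀ x, |deriv a x| ≤ B) (x : ℝ) :
    |fluxWeight K a α x| ≤ α * (1 + α) * B ^ 2 := by
  have hB : 0 ≤ B := (abs_nonneg _).trans (hK 0)
  calc |fluxWeight K a α x|
      ≤ α ^ 2 * (|deriv K (α * x)| * |a x|) + α * (|K (α * x)| * |deriv a x|) := by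
        unfold fluxWeight
        refine (abs_sub _ _).trans_eq ?_
        simp only [abs_mul, abs_neg, abs_pow, abs_of_nonneg hα]
        ring
    _ ≤ α ^ 2 * (B * B) + α * (B * B) := by
        gcongr
        exacts [hK' _, ha x, hK _, ha' x]
    _ = α * (1 + α) * B ^ 2 := by ring

theorem mul_integral_rescaled_kernel_mul_deriv_eq_integral_fluxWeight (hK : ContDiff ℝ 1 K)
    (hKc : HasCompactSupport K) (ha : ContDiff ℝ 1 a) {G : ℝ → ℂ} (hG : ContDiff ℝ 1 G)
    {ε η : ℝ} (hε : 0 < ε) (hη : 0 < η) :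
    (ε : ℂ) * ∫ x, ((η⁻¹ * K (x / η) * a (x / ε) : ℝ) : ℂ) * deriv (fun y => G (ε⁻¹ * y)) x =
      ∫ x, (fluxWeight K a (ε / η) x : ℂ) * G x := by
  set α := ε / η with hα_def
  set w : ℝ → ℝ := fun y => K (α * y) * a y
  have hw : ContDiff ℝ 1 w := (hK.comp (contDiff_const.mul contDiff_id)).mul ha
  set u : ℝ → ℂ := fun y => (w y : ℂ)
  have hu : ContDiff ℝ 1 u := Complex.ofRealCLM.contDiff.comp hw
  have hu_supp : HasCompactSupport u :=
    ((hKc.comp_smul (div_pos hε hη).ne').mul_right (f' := a)).comp_left Complex.ofReal_zero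
  have hu_deriv : ∀ x, deriv u x = ((deriv w x : ℝ) : ℂ) := fun x =>
    (hw.differentiable one_ne_zero x).hasDerivAt.ofReal_comp.deriv
  have h_rescale : (ε : ℂ) * ∫ x, ((η⁻¹ * K (x / η) * a (x / ε) : ℝ) : ℂ) *
      deriv (fun y => G (ε⁻¹ * y)) x = α * ∫ y, u y * deriv G y := by
    have h_integrand : ∀ x, ((η⁻¹ * K (x / η) * a (x / ε) : ℝ) : ℂ) *
        deriv (fun y => G (ε⁻¹ * y)) x =
        ((ε⁻¹ * η⁻¹ : ℝ) : ℂ) * (u (ε⁻¹ * x) * deriv G (ε⁻¹ * x)) := fun x => by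
      rw [deriv_comp_mul_left, Complex.real_smul]
      simp only [u, w, hα_def]
      rw [show ε / η * (ε⁻¹ * x) = x / η by field_simp, div_eq_inv_mul x ε]
      push_cast
      ring
    simp_rw [h_integrand]
    rw [integral_const_mul, Measure.integral_comp_inv_mul_left (fun y => u y * deriv G y),
      abs_of_pos hε, Complex.real_smul, hα_def]
    push_cast
    field_simp
  rw [h_rescale, integral_mul_deriv_eq_neg_of_hasCompactSupport hu hG hu_supp,
    fluxWeight_eq_neg_mul_deriv (hK.differentiable one_ne_zero) (ha.differentiable one_ne_zero),
    mul_neg, ← integral_const_mul, ← integral_neg]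
  congr 1 with x
  rw [hu_deriv]
  push_cast
  ring

theorem integral_fluxWeight_sq_le (hKsupp : support K ⊆ Icc (-1) 1) {α B : ℝ} (hα : 0 < α)
    (hα_le : α ≤ 1) (hK : ∀ x, |K x| ≤ B) (hK' : ∀ x, |deriv K x| ≤ B) (ha : ∀ x, |a x| ≤ B)
    (ha' : ∀ x, |deriv a x| ≤ B) :
    ∫ x, fluxWeight K a α x ^ 2 ≤ 2 * B ^ 4 * (1 + α) ^ 2 :=
  calc ∫ x, fluxWeight K a α x ^ 2 ≤ 2 * (1 / α) * (α * (1 + α) * B ^ 2) ^ 2 :=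
        integral_sq_le_of_support_subset_Icc (by positivity)
          (support_fluxWeight_subset hKsupp hα) (abs_fluxWeight_le hα.le hK hK' ha ha')
    _ = α * (2 * B ^ 4 * (1 + α) ^ 2) := by field_simp
    _ ≤ 2 * B ^ 4 * (1 + α) ^ 2 := mul_le_of_le_one_left (by positivity) hα_le

theorem exists_abs_le_of_hasCompactSupport_of_periodic (hK : ContDiff ℝ 1 K)
    (hKc : HasCompactSupport K) (ha : ContDiff ℝ 1 a) {c : ℝ} (hc : c ≠ 0)
    (haper : Periodic a c) :
    ∃ B, (∀ x, |K x| ≤ B) ∧ (∀ x, |deriv K x| ≤ B) ∧ (∀ x, |a x| ≤ B) ∧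
      ∀ x, |deriv a x| ≤ B := by
  obtain ⟨B, hB⟩ := ((((hKc.isCompact_range hK.continuous).isBounded.union
    (hKc.deriv.isCompact_range (hK.continuous_deriv le_rfl)).isBounded).union
    (haper.isBounded_of_continuous hc ha.continuous)).union
    (haper.deriv.isBounded_of_continuous hc (ha.continuous_deriv le_rfl))).exists_norm_le
  simp only [union_def, mem_ofPred_eq, or_imp, forall_and, forall_mem_range,
    Real.norm_eq_abs] at hB
  exact ⟨B, hB.1.1.1, hB.1.1.2, hB.1.2, hB.2⟩

end FluxWeight

/-- **Rescaled form and `L²` bound of the averaged-flux weight `h(·,α)`.**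
With `K` a `C¹` kernel supported in `[-1,1]`, `a` 1-periodic `C¹`, and
`h(x,α) = -α² K'(αx) a(x) - α K(αx) a'(x)`, one has:
(i) for all `ε, η > 0` (with `α = ε/η`), `h(·,α)` is continuous, supported in
`[-1/α, 1/α]`, and for every 1-periodic `C¹` function `ψ` and every `k`,
`ε ∫ K_η(x) a(x/ε) ∂ₓ[ψ(x/ε) e^{ikx/ε}] dx = ∫ h(x,α) ψ(x) e^{ikx} dx`;
(ii) there is `C > 0` depending only on `K` and `a` such that
`∫ |h(x,α)|² dx ≤ C (1+α)²` whenever `α ≤ 1`. -/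
theorem stmt_19
    (K : ℝ → ℝ) (hK : ContDiff ℝ 1 K)
    (hKsupp : Function.support K ⊆ Set.Icc (-1 : ℝ) 1)
    (a : ℝ → ℝ) (ha : ContDiff ℝ 1 a) (haper : ∀ x : ℝ, a (x + 1) = a x)
    (h : ℝ → ℝ → ℝ)
    (hh : ∀ x α : ℝ, h x α = -α ^ 2 * deriv K (α * x) * a x - α * K (α * x) * deriv a x) :
    (∀ ε η : ℝ, 0 < ε → 0 < η →
      (Continuous fun x => h x (ε / η)) ∧
      (Function.support (fun x => h x (ε / η)) ⊆
        Set.Icc (-(1 / (ε / η))) (1 / (ε / η))) ∧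
      (∀ k : ℝ, ∀ ψ : ℝ → ℂ, (∀ x : ℝ, ψ (x + 1) = ψ x) → ContDiff ℝ 1 ψ →
        (ε : ℂ) * ∫ x : ℝ, ((η⁻¹ * K (x / η) * a (x / ε) : ℝ) : ℂ) *
            deriv (fun y => ψ (y / ε) * Complex.exp (Complex.I * k * y / ε)) x =
          ∫ x : ℝ, ((h x (ε / η) : ℝ) : ℂ) * ψ x * Complex.exp (Complex.I * k * x))) ∧
    ∃ C > (0 : ℝ), ∀ ε η : ℝ, 0 < ε → 0 < η → ε / η ≤ 1 →
      (∫ x : ℝ, h x (ε / η) ^ 2) ≤ C * (1 + ε / η) ^ 2 := by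
  obtain rfl : h = fun x α => fluxWeight K a α x := funext₂ hh
  have hKc : HasCompactSupport K :=
    isCompact_Icc.of_isClosed_subset (isClosed_tsupport K) (closure_minimal hKsupp isClosed_Icc)
  refine ⟨fun ε η hε hη => ⟨continuous_fluxWeight hK ha _,
    support_fluxWeight_subset hKsupp (div_pos hε hη), fun k ψ _ hψ => ?_⟩, ?_⟩
  · set G : ℝ → ℂ := fun y => ψ y * Complex.exp (Complex.I * k * y)
    have hG : ContDiff ℝ 1 G := hψ.mul (contDiff_const.mul Complex.ofRealCLM.contDiff).cexp
    have hG_comp : (fun y => ψ (y / ε) * Complex.exp (Complex.I * k * y / ε)) =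
        fun y => G (ε⁻¹ * y) := by
      funext y
      simp only [G, div_eq_inv_mul y ε]
      push_cast
      ring_nf
    rw [hG_comp,
      mul_integral_rescaled_kernel_mul_deriv_eq_integral_fluxWeight hK hKc ha hG hε hη]
    simp only [G, mul_assoc]
  obtain ⟨B, hK, hK', ha, ha'⟩ :=
    exists_abs_le_of_hasCompactSupport_of_periodic hK hKc ha one_ne_zero haper
  refine ⟨2 * B ^ 4 + 1, by positivity, fun ε η hε hη hα_le => ?_⟩
  refine (integral_fluxWeight_sq_le hKsupp (div_pos hε hη) hα_le hK hK' ha ha').trans ?_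
  gcongr
  linarith
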